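/- Identification of the conditional cumulative hazard under independent censoring: if T and C are independent nonnegative random variables with continuous distributions, U = min(T, C), Δ = 1{T ≤ C}, and P(U ≥ t) > 0, then the cumulative hazard of T satisfies Λ_T(t) = ∫₀^t dP(U ≤ u, Δ = 1)/P(U ≥ u) for t with P(U ≥ t) > 0. -/

import Mathlib

open MeasureTheory Set
open scoped ENNReal

/-- Identification of the cumulative hazard under independent censoring
(absolutely continuous version): if `T` and `C` are independent, `T` has density
`fT`, `U = min(T,C)`, `Δ = 1{T ≤ C}`, the observed-event subdistribution has
density `g`, and `P(U ≥ u) > 0` on `(0,t]`, then the cumulative hazard of `T`,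
`Λ_T(t) = ∫₀^t fT(u)/P(T > u) du`, equals `∫₀^t g(u)/P(U ≥ u) du`, i.e.
`Λ_T(t) = ∫₀^t dP(U ≤ u, Δ = 1)/P(U ≥ u)`. -/
theorem cumulative_hazard_identification_censoring
    {Ω : Type*} [MeasurableSpace Ω] (μ : Measure Ω) [IsProbabilityMeasure μ]
    (T C : Ω → ℝ) (hT : Measurable T) (hC : Measurable C)
    (hTnn : ∀ ω, 0 ≤ T ω) (hCnn : ∀ ω, 0 ≤ C ω)
    (hindep : ProbabilityTheory.IndepFun T C μ)
    (fT g : ℝ → ℝ)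
    (hfT_nn : ∀ u, 0 ≤ fT u) (hg_nn : ∀ u, 0 ≤ g u)
    (hfT_int : Integrable fT) (hg_int : Integrable g)
    -- `fT` is a density of `T`
    (hfT : ∀ x : ℝ, (μ {ω | T ω ≤ x}).toReal = ∫ u in Set.Iic x, fT u)
    -- `g` is a density of the subdistribution `u ↦ P(U ≤ u, Δ = 1)`
    (hg : ∀ x : ℝ,
      (μ {ω | min (T ω) (C ω) ≤ x ∧ T ω ≤ C ω}).toReal = ∫ u in Set.Iic x, g u)
    (t : ℝ) (ht : 0 < t)
    -- positivity of the at-risk probability on `(0, t]`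
    (hpos : ∀ u ∈ Set.Ioc (0:ℝ) t, 0 < (μ {ω | u ≤ min (T ω) (C ω)}).toReal) :
    ∫ u in Set.Ioc (0:ℝ) t, fT u / (μ {ω | u < T ω}).toReal
      = ∫ u in Set.Ioc (0:ℝ) t, g u / (μ {ω | u ≤ min (T ω) (C ω)}).toReal := by
  classical
  have hνT : IsProbabilityMeasure (μ.map T) := Measure.isProbabilityMeasure_map hT.aemeasurable
  have hνC : IsProbabilityMeasure (μ.map C) := Measure.isProbabilityMeasure_map hC.aemeasurable
  -- the survival function of the censoring variable
  set SC : ℝ → ℝ := fun u => (μ {ω | u ≤ C ω}).toReal with hSC_def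
  have hSC_eq : ∀ u, ENNReal.ofReal (SC u) = μ {ω | u ≤ C ω} := fun u =>
    ENNReal.ofReal_toReal (measure_ne_top _ _)
  have hSC_map : ∀ u, (μ.map C) (Ici u) = μ {ω | u ≤ C ω} := fun u => by
    rw [Measure.map_apply hC measurableSet_Ici]; rfl
  have hSC_anti : Antitone SC := by
    intro u v huv
    exact ENNReal.toReal_mono (measure_ne_top _ _)
      (measure_mono (fun ω h => le_trans huv h))
  have hSC_meas : Measurable SC := hSC_anti.measurable
  have hSC_nn : ∀ u, 0 ≤ SC u := fun u => ENNReal.toReal_nonneg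
  have hSC_le : ∀ u, SC u ≤ 1 := fun u => by
    simpa using ENNReal.toReal_mono ENNReal.one_ne_top (prob_le_one (μ := μ))
  -- T has density fT against Lebesgue measure
  have hfT_lint : ∫⁻ u, ENNReal.ofReal (fT u) ≠ ∞ := by
    rw [← ofReal_integral_eq_lintegral_ofReal hfT_int (ae_of_all _ hfT_nn)]
    exact ENNReal.ofReal_ne_top
  haveI : IsFiniteMeasure (volume.withDensity fun u => ENNReal.ofReal (fT u)) :=
    isFiniteMeasure_withDensity hfT_lint
  have hT_dens : μ.map T = volume.withDensity (fun u => ENNReal.ofReal (fT u)) := by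
    refine Measure.ext_of_Iic _ _ (fun x => ?_)
    rw [withDensity_apply _ measurableSet_Iic,
      ← ofReal_integral_eq_lintegral_ofReal hfT_int.restrict (ae_of_all _ hfT_nn),
      ← hfT x, Measure.map_apply hT measurableSet_Iic,
      ENNReal.ofReal_toReal (measure_ne_top _ _)]
    rfl
  -- T is atomless
  have hT_atom : ∀ u : ℝ, μ {ω | T ω = u} = 0 := by
    intro u
    have h0 : (μ.map T) {u} = 0 := by
      rw [hT_dens]
      exact (withDensity_absolutelyContinuous _ _) (measure_singleton u)
    rw [Measure.map_apply hT (measurableSet_singleton u)] at h0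
    exact h0
  have hST_eq : ∀ u : ℝ, μ {ω | u < T ω} = μ {ω | u ≤ T ω} := by
    intro u
    refine le_antisymm (measure_mono fun ω h => (le_of_lt h : u ≤ T ω)) ?_
    have hsub : {ω | u ≤ T ω} ⊆ {ω | u < T ω} ∪ {ω | T ω = u} := by
      intro ω h
      have h1 : u ≤ T ω := h
      rcases lt_or_eq_of_le h1 with h' | h'
      · exact Or.inl h'
      · exact Or.inr h'.symm
    calc μ {ω | u ≤ T ω} ≤ μ ({ω | u < T ω} ∪ {ω | T ω = u}) := measure_mono hsub
      _ ≤ μ {ω | u < T ω} + μ {ω | T ω = u} := measure_union_le _ _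
      _ = μ {ω | u < T ω} := by rw [hT_atom, add_zero]
  -- integrability of fT * SC
  have hh_nn : ∀ u, 0 ≤ fT u * SC u := fun u => mul_nonneg (hfT_nn u) (hSC_nn u)
  have hh_int : Integrable (fun u => fT u * SC u) := by
    have := hfT_int.bdd_mul (c := 1) hSC_meas.aestronglyMeasurable
      (ae_of_all _ fun u => by rw [Real.norm_eq_abs, abs_of_nonneg (hSC_nn u)]; exact hSC_le u)
    simpa [mul_comm] using this
  -- the joint law is the product of the marginals
  have hmap_prod : μ.map (fun ω => (T ω, C ω)) = (μ.map T).prod (μ.map C) :=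
    (ProbabilityTheory.indepFun_iff_map_prod_eq_prod_map_map
      hT.aemeasurable hC.aemeasurable).mp hindep
  -- key identity: the integrals of g and fT * SC agree on all Iic x
  have key : ∀ x : ℝ, ∫ u in Iic x, g u = ∫ u in Iic x, fT u * SC u := by
    intro x
    rw [← hg x]
    have hset : {ω | min (T ω) (C ω) ≤ x ∧ T ω ≤ C ω}
        = (fun ω => (T ω, C ω)) ⁻¹' {p : ℝ × ℝ | p.1 ≤ x ∧ p.1 ≤ p.2} := by
      ext ω
      simp only [Set.mem_setOf_eq, Set.mem_preimage]
      constructor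
      · rintro ⟨h1, h2⟩; exact ⟨by rwa [min_eq_left h2] at h1, h2⟩
      · rintro ⟨h1, h2⟩; exact ⟨by rwa [min_eq_left h2], h2⟩
    have hSmeas : MeasurableSet {p : ℝ × ℝ | p.1 ≤ x ∧ p.1 ≤ p.2} :=
      (measurableSet_le measurable_fst measurable_const).inter
        (measurableSet_le measurable_fst measurable_snd)
    have h1 : μ {ω | min (T ω) (C ω) ≤ x ∧ T ω ≤ C ω}
        = ((μ.map T).prod (μ.map C)) {p : ℝ × ℝ | p.1 ≤ x ∧ p.1 ≤ p.2} := by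
      rw [hset, ← Measure.map_apply (hT.prodMk hC) hSmeas, hmap_prod]
    have h2 : ((μ.map T).prod (μ.map C)) {p : ℝ × ℝ | p.1 ≤ x ∧ p.1 ≤ p.2}
        = ∫⁻ u in Iic x, ENNReal.ofReal (SC u) ∂(μ.map T) := by
      rw [Measure.prod_apply hSmeas, ← lintegral_indicator measurableSet_Iic]
      congr 1
      ext u
      by_cases hu : u ≤ x
      · have hpre : Prod.mk u ⁻¹' {p : ℝ × ℝ | p.1 ≤ x ∧ p.1 ≤ p.2} = Ici u := by
          ext c; simp [hu]
        rw [hpre, Set.indicator_of_mem (by exact hu : u ∈ Iic x), hSC_eq, hSC_map]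
      · have hpre : Prod.mk u ⁻¹' {p : ℝ × ℝ | p.1 ≤ x ∧ p.1 ≤ p.2} = ∅ := by
          ext c; simp [hu]
        rw [hpre, Set.indicator_of_notMem (by exact hu : u ∉ Iic x)]
        simp
    have h3 : ∫⁻ u in Iic x, ENNReal.ofReal (SC u) ∂(μ.map T)
        = ∫⁻ u in Iic x, ENNReal.ofReal (fT u * SC u) := by
      rw [hT_dens, setLIntegral_withDensity_eq_lintegral_mul₀
        hfT_int.1.aemeasurable.ennreal_ofReal
        hSC_meas.ennreal_ofReal.aemeasurable measurableSet_Iic]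
      refine setLIntegral_congr_fun measurableSet_Iic (fun u _ => ?_)
      simp [ENNReal.ofReal_mul (hfT_nn u)]
    have h4 : ∫⁻ u in Iic x, ENNReal.ofReal (fT u * SC u)
        = ENNReal.ofReal (∫ u in Iic x, fT u * SC u) :=
      (ofReal_integral_eq_lintegral_ofReal hh_int.restrict (ae_of_all _ hh_nn)).symm
    rw [h1, h2, h3, h4, ENNReal.toReal_ofReal
      (integral_nonneg fun u => hh_nn u)]
  -- hence g = fT * SC almost everywhere
  have hg_lint : ∫⁻ u, ENNReal.ofReal (g u) ≠ ∞ := by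
    rw [← ofReal_integral_eq_lintegral_ofReal hg_int (ae_of_all _ hg_nn)]
    exact ENNReal.ofReal_ne_top
  haveI : IsFiniteMeasure (volume.withDensity fun u => ENNReal.ofReal (g u)) :=
    isFiniteMeasure_withDensity hg_lint
  have hae : ∀ᵐ u ∂(volume : Measure ℝ), g u = fT u * SC u := by
    have hwd : volume.withDensity (fun u => ENNReal.ofReal (g u))
        = volume.withDensity (fun u => ENNReal.ofReal (fT u * SC u)) := by
      refine Measure.ext_of_Iic _ _ (fun x => ?_)
      rw [withDensity_apply _ measurableSet_Iic, withDensity_apply _ measurableSet_Iic,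
        ← ofReal_integral_eq_lintegral_ofReal hg_int.restrict (ae_of_all _ hg_nn),
        ← ofReal_integral_eq_lintegral_ofReal hh_int.restrict (ae_of_all _ hh_nn),
        key x]
    have h2 := (withDensity_eq_iff
      hg_int.1.aemeasurable.ennreal_ofReal
      hh_int.1.aemeasurable.ennreal_ofReal
      hg_lint).mp hwd
    filter_upwards [h2] with u hu
    have := congrArg ENNReal.toReal hu
    rwa [ENNReal.toReal_ofReal (hg_nn u), ENNReal.toReal_ofReal (hh_nn u)] at this
  -- the at-risk probability factors by independence
  have hmin : ∀ u : ℝ, μ {ω | u ≤ min (T ω) (C ω)}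
      = μ {ω | u ≤ T ω} * μ {ω | u ≤ C ω} := by
    intro u
    have h := hindep.measure_inter_preimage_eq_mul (Ici u) (Ici u)
      measurableSet_Ici measurableSet_Ici
    have hset : T ⁻¹' Ici u ∩ C ⁻¹' Ici u = {ω | u ≤ min (T ω) (C ω)} := by
      ext ω
      simp [le_min_iff]
    rw [hset] at h
    exact h
  -- conclude: the integrands agree a.e. on (0, t]
  refine setIntegral_congr_ae measurableSet_Ioc ?_
  filter_upwards [hae] with u hu hmem
  have hPU : 0 < (μ {ω | u ≤ min (T ω) (C ω)}).toReal := hpos u hmem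
  have hPUeq : (μ {ω | u ≤ min (T ω) (C ω)}).toReal
      = (μ {ω | u ≤ T ω}).toReal * SC u := by
    rw [hmin u, ENNReal.toReal_mul]
  have hSTpos : 0 < (μ {ω | u ≤ T ω}).toReal := by
    rcases mul_pos_iff.mp (hPUeq ▸ hPU) with ⟨h, _⟩ | ⟨_, h⟩
    · exact h
    · exact absurd h (not_lt.mpr ENNReal.toReal_nonneg)
  have hSCpos : 0 < SC u := by
    rcases mul_pos_iff.mp (hPUeq ▸ hPU) with ⟨_, h⟩ | ⟨h, _⟩
    · exact h
    · exact absurd h (not_lt.mpr ENNReal.toReal_nonneg)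
  rw [hST_eq u, hu, hPUeq, mul_div_mul_right _ _ hSCpos.ne']
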